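/- arXiv:1108.2974 — 3 statements merged into one kernel-verified Lean document; each statement's English description precedes it below -/
import Mathlib

section
/- Let X be a finite undirected simple graph with bi-threshold vertex functions, let v be a vertex, and let x ∈ {0,1}^n with x_v = 1 be such that applying the X-local function F_v changes the state of v from 1 to 0. Then P(F_v(x)) − P(x) ≤ (k↓_v − k↑_v) − 2. -/
/-- `σ(x[v])`: the number of vertices in state `1` among `v` and its neighbors. -/
noncomputable def sigmaLoc {n : ℕ} (G : SimpleGraph (Fin n)) (x : Fin n → Bool) (v : Fin n) : ℕ :=
  {u : Fin n | G.Adj v u ∧ x u = true}.ncard + (if x v = true then 1 else 0)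

/-- The `X`-local bi-threshold function `F_v`: updates coordinate `v` of `x` by the
bi-threshold rule with up-threshold `kup v` and down-threshold `kdown v`, leaving all other
coordinates unchanged. -/
noncomputable def localStep {n : ℕ} (G : SimpleGraph (Fin n)) (kup kdown : Fin n → ℕ)
    (x : Fin n → Bool) (v : Fin n) : Fin n → Bool :=
  Function.update x v
    (if x v = true then (if sigmaLoc G x v < kdown v then false else true)
     else (if kup v ≤ sigmaLoc G x v then true else false))

/-- The sequential dynamical system map for the update sequence `l`:
apply the local functions `F_v` in the order given by `l`. -/
noncomputable def sdsMap {n : ℕ} (G : SimpleGraph (Fin n)) (kup kdown : Fin n → ℕ)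
    (l : List (Fin n)) (x : Fin n → Bool) : Fin n → Bool :=
  l.foldl (localStep G kup kdown) x

/-- The system potential: each vertex `v` contributes `kdown v` if it is in state `1` and
`d(v) + 2 - kup v` if it is in state `0`; each edge contributes `1` if its endpoints are in
different states and `0` otherwise. -/
noncomputable def potential {n : ℕ} (G : SimpleGraph (Fin n)) (kup kdown : Fin n → ℕ)
    (x : Fin n → Bool) : ℤ :=
  (∑ v : Fin n,
      (if x v = true then (kdown v : ℤ) else ((G.neighborSet v).ncard : ℤ) + 2 - (kup v : ℤ)))
  + ({e : Sym2 (Fin n) | e ∈ G.edgeSet ∧ ∃ u w : Fin n, e = s(u, w) ∧ x u ≠ x w}.ncard : ℤ)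

/-!
Flipping `v` from `1` to `0` changes only the potential of `v`, by `(d(v) + 2 - k↑) - k↓`, and the
edges at `v`: its `m` neighbours in state `1` become discordant while its `d(v) - m` neighbours in
state `0` cease to be. The total change is `2m + 2 - k↑ - k↓`, and the flip happens only when
`σ(x[v]) = m + 1 < k↓`, i.e. `2m + 2 ≤ 2k↓ - 2`.
-/

open Function

namespace SimpleGraph

variable {V : Type*} (G : SimpleGraph V)

def discordantEdges (x : V → Bool) : Set (Sym2 V) :=
  {e | e ∈ G.edgeSet ∧ ∃ u w : V, e = s(u, w) ∧ x u ≠ x w}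

variable {G}

theorem mk_mem_discordantEdges {x : V → Bool} {a b : V} :
    s(a, b) ∈ G.discordantEdges x ↔ G.Adj a b ∧ x a ≠ x b := by
  refine ⟨?_, fun h => ⟨h.1, a, b, rfl, h.2⟩⟩
  rintro ⟨hab, u, w, huw, hne⟩
  refine ⟨hab, ?_⟩
  rcases Sym2.eq_iff.mp huw with ⟨rfl, rfl⟩ | ⟨rfl, rfl⟩
  exacts [hne, hne.symm]

theorem discordantEdges_inter_incidenceSet (x : V → Bool) (v : V) :
    G.discordantEdges x ∩ G.incidenceSet v =
      (fun u => s(v, u)) '' {u | G.Adj v u ∧ x u ≠ x v} := by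
  ext e
  induction e using Sym2.ind with
  | _ a b =>
    simp only [Set.mem_inter_iff, mk_mem_discordantEdges, mk'_mem_incidenceSet_iff,
      Set.mem_image, Set.mem_ofPred_eq, Sym2.eq_iff]
    constructor
    · rintro ⟨⟨hab, hx⟩, -, rfl | rfl⟩
      exacts [⟨b, ⟨hab, hx.symm⟩, .inl ⟨rfl, rfl⟩⟩, ⟨a, ⟨hab.symm, hx⟩, .inr ⟨rfl, rfl⟩⟩]
    · rintro ⟨u, ⟨hvu, hx⟩, ⟨rfl, rfl⟩ | ⟨rfl, rfl⟩⟩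
      exacts [⟨⟨hvu, hx.symm⟩, hvu, .inl rfl⟩, ⟨⟨hvu.symm, hx⟩, hvu.symm, .inr rfl⟩]

theorem ncard_discordantEdges_inter_incidenceSet (x : V → Bool) (v : V) :
    (G.discordantEdges x ∩ G.incidenceSet v).ncard = {u | G.Adj v u ∧ x u ≠ x v}.ncard := by
  rw [discordantEdges_inter_incidenceSet]
  exact Set.InjOn.ncard_image fun a _ b _ hab => Sym2.congr_right.mp hab

theorem discordantEdges_update_sdiff_incidenceSet [DecidableEq V] (x : V → Bool) (v : V)
    (b : Bool) :
    G.discordantEdges (update x v b) \ G.incidenceSet v =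
      G.discordantEdges x \ G.incidenceSet v := by
  ext e
  induction e using Sym2.ind with
  | _ u w =>
    simp only [Set.mem_sdiff, mk_mem_discordantEdges, mk'_mem_incidenceSet_iff, not_and, not_or]
    refine and_congr_left fun hv => and_congr_right fun huw => ?_
    rw [update_of_ne (Ne.symm (hv huw).1), update_of_ne (Ne.symm (hv huw).2)]

theorem ncard_discordantEdges_update_sub [Finite V] [DecidableEq V] (x : V → Bool) (v : V)
    (b : Bool) :
    ((G.discordantEdges (update x v b)).ncard : ℤ) - (G.discordantEdges x).ncard =
      {u | G.Adj v u ∧ x u ≠ b}.ncard - {u | G.Adj v u ∧ x u ≠ x v}.ncard := by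
  have hnbr : {u | G.Adj v u ∧ update x v b u ≠ update x v b v} = {u | G.Adj v u ∧ x u ≠ b} :=
    Set.ext fun u => and_congr_right fun h => by rw [update_self, update_of_ne h.ne']
  rw [← Set.ncard_inter_add_ncard_sdiff_eq_ncard _ (G.incidenceSet v),
    ← Set.ncard_inter_add_ncard_sdiff_eq_ncard (G.discordantEdges x) (G.incidenceSet v),
    ncard_discordantEdges_inter_incidenceSet, ncard_discordantEdges_inter_incidenceSet, hnbr,
    discordantEdges_update_sdiff_incidenceSet]
  push_cast
  ring

theorem ncard_adj_add_ncard_adj_not [Finite V] (v : V) (p : V → Prop) :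
    {u | G.Adj v u ∧ p u}.ncard + {u | G.Adj v u ∧ ¬p u}.ncard = (G.neighborSet v).ncard :=
  Set.ncard_inter_add_ncard_sdiff_eq_ncard (G.neighborSet v) {u | p u}

variable (G)

noncomputable def vertexPotential (kup kdown : V → ℕ) (v : V) (b : Bool) : ℤ :=
  if b = true then (kdown v : ℤ) else ((G.neighborSet v).ncard : ℤ) + 2 - (kup v : ℤ)

end SimpleGraph

theorem sum_apply_update_sub {ι α M : Type*} [Fintype ι] [DecidableEq ι] [AddCommGroup M]
    (f : ι → α → M) (x : ι → α) (v : ι) (b : α) :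
    ∑ i, f i (update x v b i) - ∑ i, f i (x i) = f v b - f v (x v) := by
  rw [← Finset.sum_sub_distrib,
    Finset.sum_eq_single v (fun i _ hi => by rw [update_of_ne hi, sub_self]) (by simp),
    update_self]

section

variable {n : ℕ} (G : SimpleGraph (Fin n)) (kup kdown : Fin n → ℕ)

theorem potential_eq (x : Fin n → Bool) :
    potential G kup kdown x =
      ∑ v, G.vertexPotential kup kdown v (x v) + (G.discordantEdges x).ncard :=
  rfl

theorem potential_update_sub (x : Fin n → Bool) (v : Fin n) (b : Bool) :
    potential G kup kdown (update x v b) - potential G kup kdown x =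
      G.vertexPotential kup kdown v b - G.vertexPotential kup kdown v (x v) +
        ({u | G.Adj v u ∧ x u ≠ b}.ncard - {u | G.Adj v u ∧ x u ≠ x v}.ncard) := by
  rw [potential_eq, potential_eq, ← G.ncard_discordantEdges_update_sub,
    ← sum_apply_update_sub (G.vertexPotential kup kdown)]
  ring

variable {G kup kdown}

theorem localStep_eq_update (x : Fin n → Bool) (v : Fin n) :
    localStep G kup kdown x v = update x v (localStep G kup kdown x v v) := by
  rw [localStep, update_self]

theorem sigmaLoc_eq_of_true {x : Fin n → Bool} {v : Fin n} (hxv : x v = true) :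
    sigmaLoc G x v = {u | G.Adj v u ∧ x u = true}.ncard + 1 := by
  simp [sigmaLoc, hxv]

theorem sigmaLoc_lt_of_localStep_eq_false {x : Fin n → Bool} {v : Fin n} (hxv : x v = true)
    (h : localStep G kup kdown x v v = false) : sigmaLoc G x v < kdown v := by
  by_contra hge
  simp [localStep, hxv, hge] at h

end

/-- if applying the local function `F_v` changes the state of `v` from `1`
to `0`, then the system potential changes by at most `(kdown v - kup v) - 2`. -/
theorem potential_drop_down_transition
    (n : ℕ) (G : SimpleGraph (Fin n)) (kup kdown : Fin n → ℕ)
    (v : Fin n) (x : Fin n → Bool)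
    (hxv : x v = true)
    (hchange : localStep G kup kdown x v v = false) :
    potential G kup kdown (localStep G kup kdown x v) - potential G kup kdown x
      ≤ ((kdown v : ℤ) - (kup v : ℤ)) - 2 := by
  have hσ := sigmaLoc_lt_of_localStep_eq_false hxv hchange
  rw [sigmaLoc_eq_of_true hxv] at hσ
  have hdeg := G.ncard_adj_add_ncard_adj_not v (fun u => x u = true)
  rw [localStep_eq_update, hchange, potential_update_sub, hxv]
  simp only [SimpleGraph.vertexPotential, Bool.false_eq_true, ↓reduceIte, Bool.ne_false_iff,
    ne_eq]
  omega
end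

section
/- For every integer c ≥ 2 there exists a tree X on n = 4c−3 vertices (namely the spider tree obtained by joining a center vertex of degree 4 to one endpoint of each of four disjoint paths on c−1 vertices) and a permutation π of its vertices such that the SDS map F_π over X, with all vertices assigned thresholds (k↑, k↓) = (1, 3), has a periodic orbit of length c. -/
/-!
With thresholds `(1, 3)` a vertex that is on stays on iff at least two of its neighbours are on,
and a vertex that is off switches on iff some neighbour is on. Take the spider with `k` legs of
length `m` and update the body first, then each leg from the body outwards. If the on-vertices of
a leg form a prefix of length `p`, one sweep leaves a prefix of length `p - 1`, and an empty leg
fills up completely; the body stays on as long as two legs are non-empty. Hence the prefix lengths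
rotate in `ℤ/(m + 1)`. With four legs and prefix lengths `(1, 1, 0, 0)` two legs are non-empty at
every step, so the orbit has length exactly `m + 1 = c`, on `4m + 1 = 4c - 3` vertices.
-/

namespace SimpleGraph

variable {V : Type*}

theorem reachable_fromRel_parent (r : V) (f : V → V) (rank : V → ℕ)
    (hf : ∀ v ≠ r, rank (f v) < rank v) (v : V) :
    (fromRel fun u w => u ≠ r ∧ w = f u).Reachable r v := by
  induction h : rank v using Nat.strong_induction_on generalizing v with
  | _ n ih =>
    by_cases hv : v = r
    · subst hv; rfl
    · have hlt := hf v hv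
      have hadj : (fromRel fun u w => u ≠ r ∧ w = f u).Adj (f v) v :=
        (fromRel_adj _ _ _).2 ⟨fun he => by rw [he] at hlt; omega, Or.inr ⟨hv, rfl⟩⟩
      exact (ih _ (h ▸ hlt) (f v) rfl).trans hadj.reachable

theorem isTree_fromRel_parent [Finite V] (r : V) (f : V → V) (rank : V → ℕ)
    (hf : ∀ v ≠ r, rank (f v) < rank v) :
    (fromRel fun u w => u ≠ r ∧ w = f u).IsTree := by
  classical
  set G := fromRel fun u w => u ≠ r ∧ w = f u
  have hne : ∀ v ≠ r, v ≠ f v := fun v hv he => by have := hf v hv; rw [← he] at this; omega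
  -- every edge is `s(v, f v)` for exactly one `v ≠ r`, so there are `|V| - 1` edges
  let e : {v // v ≠ r} → G.edgeSet := fun v =>
    ⟨s(v.1, f v.1), (mem_edgeSet G).2 ((fromRel_adj _ _ _).2 ⟨hne v.1 v.2, Or.inl ⟨v.2, rfl⟩⟩)⟩
  have he : Function.Bijective e := by
    refine ⟨fun v w hvw => ?_, fun ⟨x, hx⟩ => ?_⟩
    · simp only [e, Subtype.mk.injEq, Sym2.eq_iff] at hvw
      rcases hvw with ⟨h, -⟩ | ⟨h₁, h₂⟩
      · exact Subtype.ext h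
      · have hv := hf _ v.2
        have hw := hf _ w.2
        rw [h₂] at hv
        rw [← h₁] at hw
        omega
    · induction x with
      | h a b =>
        obtain ⟨-, ⟨ha, rfl⟩ | ⟨hb, rfl⟩⟩ := (fromRel_adj _ _ _).1 ((mem_edgeSet G).1 hx)
        · exact ⟨⟨a, ha⟩, rfl⟩
        · exact ⟨⟨b, hb⟩, Subtype.ext Sym2.eq_swap⟩
  rw [isTree_iff_connected_and_card]
  refine ⟨(connected_iff_exists_forall_reachable _).2
    ⟨r, reachable_fromRel_parent r f rank hf⟩, ?_⟩
  rw [← Nat.card_congr (Equiv.ofBijective e he), ← Finite.card_option,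
    Nat.card_congr (Equiv.optionSubtypeNe r)]

end SimpleGraph

section BiThreshold

variable {n : ℕ} (G : SimpleGraph (Fin n))

theorem localStep_of_ne (ku kd : Fin n → ℕ) (x : Fin n → Bool) {u v : Fin n} (h : u ≠ v) :
    localStep G ku kd x v u = x u :=
  Function.update_of_ne h _ _

theorem localStep_one_three_self (x : Fin n → Bool) (v : Fin n) :
    localStep G (fun _ => 1) (fun _ => 3) x v v =
      if x v then decide (2 ≤ {u | G.Adj v u ∧ x u = true}.ncard)
      else decide (1 ≤ {u | G.Adj v u ∧ x u = true}.ncard) := by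
  unfold localStep sigmaLoc
  rw [Function.update_self]
  generalize {u | G.Adj v u ∧ x u = true}.ncard = N
  cases x v <;> simp only [Bool.false_eq_true, if_false, if_true] <;> split_ifs <;> simp <;> omega

theorem localStep_one_three_self_of_two_adj (x : Fin n → Bool) {v a b : Fin n} (hab : a ≠ b)
    (ha : G.Adj v a) (hb : G.Adj v b) (hxv : x v = true) (hxa : x a = true) (hxb : x b = true) :
    localStep G (fun _ => 1) (fun _ => 3) x v v = true := by
  have hpair : ({a, b} : Set (Fin n)) ⊆ {u | G.Adj v u ∧ x u = true} := by
    rintro u (rfl | rfl)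
    exacts [⟨ha, hxa⟩, ⟨hb, hxb⟩]
  have := Set.ncard_le_ncard hpair (Set.toFinite _)
  rw [Set.ncard_pair hab] at this
  simp [localStep_one_three_self, hxv, this]

theorem localStep_one_three_self_of_adj_iff_pair (x : Fin n → Bool) {v a b : Fin n}
    (hab : a ≠ b) (h : ∀ u, G.Adj v u ↔ u = a ∨ u = b) :
    localStep G (fun _ => 1) (fun _ => 3) x v v =
      if x v then x a && x b else x a || x b := by
  have hset : {u | G.Adj v u ∧ x u = true} = ↑(({a, b} : Finset (Fin n)).filter (x · = true)) := by
    ext u; simp [h]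
  rw [localStep_one_three_self, hset, Set.ncard_coe_finset]
  cases x v <;> cases hxa : x a <;> cases hxb : x b <;>
    simp [Finset.filter_insert, Finset.filter_singleton, hxa, hxb, hab]

theorem localStep_one_three_self_of_adj_iff (x : Fin n → Bool) {v a : Fin n}
    (h : ∀ u, G.Adj v u ↔ u = a) :
    localStep G (fun _ => 1) (fun _ => 3) x v v = if x v then false else x a := by
  have hset : {u | G.Adj v u ∧ x u = true} = ↑(({a} : Finset (Fin n)).filter (x · = true)) := by
    ext u; simp [h]
  rw [localStep_one_three_self, hset, Set.ncard_coe_finset]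
  cases x v <;> cases hxa : x a <;> simp [Finset.filter_singleton, hxa]

theorem sdsMap_finRange_eq {ku kd : Fin n → ℕ} {x y : Fin n → Bool}
    (h : ∀ v, localStep G ku kd (fun u => if u < v then y u else x u) v v = y v) :
    sdsMap G ku kd (List.finRange n) x = y := by
  have hprefix : ∀ j ≤ n, ((List.finRange n).take j).foldl (localStep G ku kd) x
      = fun u => if u.val < j then y u else x u := by
    intro j hj
    induction j with
    | zero => funext u; simp
    | succ j ih =>
      have hjn : j < n := hj
      rw [List.take_add_one, List.getElem?_eq_getElem (by simpa using hjn), List.getElem_finRange,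
        Fin.cast_mk, Option.toList_some, List.foldl_append, ih hjn.le, List.foldl_cons,
        List.foldl_nil]
      funext u
      by_cases hu : u = ⟨j, hjn⟩
      · subst hu; simp only [lt_add_one, if_true]; exact h ⟨j, hjn⟩
      · have : u.val ≠ j := fun h' => hu (Fin.ext h')
        rw [localStep_of_ne G _ _ _ hu]
        simp only [Nat.lt_succ_iff_lt_or_eq, this, or_false]
  rw [sdsMap, ← List.take_length (l := List.finRange n), List.length_finRange,
    hprefix n le_rfl]
  funext u
  simp [u.isLt]

end BiThreshold

namespace Spider

variable {k m : ℕ}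

/-- Vertex `0` is the body of the spider, and `legVertex i j` is the vertex at distance `j + 1`
from it on leg `i`. -/
def legVertex (i : Fin k) (j : Fin m) : Fin (k * m + 1) :=
  (finProdFinEquiv (i, j)).succ

theorem val_legVertex (i : Fin k) (j : Fin m) : (legVertex i j).val = j + m * i + 1 := by
  simp [legVertex, finProdFinEquiv_apply_val]

theorem legVertex_ne_zero (i : Fin k) (j : Fin m) : legVertex i j ≠ 0 :=
  Fin.succ_ne_zero _

theorem legVertex_inj {i i' : Fin k} {j j' : Fin m} :
    legVertex i j = legVertex i' j' ↔ i = i' ∧ j = j' := by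
  simp [legVertex]

theorem eq_zero_or_eq_legVertex (v : Fin (k * m + 1)) : v = 0 ∨ ∃ i j, v = legVertex i j := by
  refine Fin.cases (Or.inl rfl) (fun w => Or.inr ?_) v
  obtain ⟨⟨i, j⟩, rfl⟩ := finProdFinEquiv.surjective w
  exact ⟨i, j, rfl⟩

def parent : Fin (k * m + 1) → Fin (k * m + 1) :=
  Fin.cases 0 fun w => if (finProdFinEquiv.symm w).2.val = 0 then 0 else w.castSucc

theorem parent_legVertex_of_val_eq_zero (i : Fin k) {j : Fin m} (hj : j.val = 0) :
    parent (legVertex i j) = 0 := by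
  simp [parent, legVertex, hj]

theorem parent_legVertex_of_val_ne_zero (i : Fin k) {j : Fin m} (hj : j.val ≠ 0) :
    parent (legVertex i j) = legVertex i ⟨j - 1, by omega⟩ := by
  simp only [parent, legVertex, Fin.cases_succ, Equiv.symm_apply_apply, hj, if_false]
  ext
  simp only [Fin.val_castSucc, finProdFinEquiv_apply_val, Fin.val_succ]
  omega

theorem parent_lt {v : Fin (k * m + 1)} (hv : v ≠ 0) : parent v < v := by
  rw [Fin.lt_def]
  obtain rfl | ⟨i, j, rfl⟩ := eq_zero_or_eq_legVertex v
  · exact absurd rfl hv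
  · by_cases hj : j.val = 0
    · rw [parent_legVertex_of_val_eq_zero i hj]
      exact Fin.pos_iff_ne_zero.2 hv
    · rw [parent_legVertex_of_val_ne_zero i hj, val_legVertex, val_legVertex]
      dsimp only
      omega

def prefixState (φ : Fin k → Fin (m + 1)) : Fin (k * m + 1) → Bool :=
  Fin.cases true fun w =>
    decide ((finProdFinEquiv.symm w).2.val < (φ (finProdFinEquiv.symm w).1).val)

@[simp]
theorem prefixState_zero (φ : Fin k → Fin (m + 1)) : prefixState φ 0 = true := rfl

@[simp]
theorem prefixState_legVertex (φ : Fin k → Fin (m + 1)) (i : Fin k) (j : Fin m) :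
    prefixState φ (legVertex i j) = decide (j.val < (φ i).val) := by
  simp only [prefixState, legVertex, Fin.cases_succ, Equiv.symm_apply_apply]

theorem prefixState_parent_legVertex (φ : Fin k → Fin (m + 1)) (i : Fin k) (j : Fin m) :
    prefixState φ (parent (legVertex i j)) = decide (j.val = 0 ∨ j.val - 1 < (φ i).val) := by
  by_cases hj : j.val = 0
  · simp [parent_legVertex_of_val_eq_zero i hj, hj]
  · simp [parent_legVertex_of_val_ne_zero i hj, hj]

theorem prefixState_injective : Function.Injective (prefixState (k := k) (m := m)) := by
  intro φ ψ h
  funext i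
  have key : ∀ j < m, j < (φ i).val ↔ j < (ψ i).val := fun j hj => by
    simpa using congrFun h (legVertex i ⟨j, hj⟩)
  have := (φ i).isLt
  have := (ψ i).isLt
  ext
  rcases lt_trichotomy (φ i).val (ψ i).val with hlt | heq | hgt
  · exact absurd ((key _ (by omega)).2 hlt) (lt_irrefl _)
  · exact heq
  · exact absurd ((key _ (by omega)).1 hgt) (lt_irrefl _)

/-- One sweep along a leg from the body outwards: a vertex that is on stays on iff its (already
updated) parent and its (not yet updated) child are on, and one that is off switches on iff one of
them is. So an on-prefix of length `p` becomes one of length `p - 1`, and an empty leg fills up. -/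
theorem decide_lt_val_sub_one (p : Fin (m + 1)) {j : ℕ} (hj : j < m) :
    decide (j < (p - 1).val) =
      if j < p.val then decide (j = 0 ∨ j - 1 < (p - 1).val) && decide (j + 1 < p.val)
      else decide (j = 0 ∨ j - 1 < (p - 1).val) || decide (j + 1 < p.val) := by
  have := p.isLt
  rw [Fin.coe_sub_one]
  simp only [Fin.ext_iff, Fin.val_zero]
  split_ifs <;> simp only [← Bool.decide_or, ← Bool.decide_and, decide_eq_decide] <;> omega

end Spider

open Spider

def spider (k m : ℕ) : SimpleGraph (Fin (k * m + 1)) :=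
  SimpleGraph.fromRel fun u v => u ≠ 0 ∧ v = parent u

theorem isTree_spider (k m : ℕ) : (spider k m).IsTree :=
  SimpleGraph.isTree_fromRel_parent 0 parent Fin.val fun _ => parent_lt

section

variable {k m : ℕ}

theorem spider_adj_zero_legVertex (i : Fin k) {j : Fin m} (hj : j.val = 0) :
    (spider k m).Adj 0 (legVertex i j) :=
  (SimpleGraph.fromRel_adj _ _ _).2 ⟨(legVertex_ne_zero i j).symm,
    Or.inr ⟨legVertex_ne_zero i j, (parent_legVertex_of_val_eq_zero i hj).symm⟩⟩

theorem spider_adj_legVertex_iff (i : Fin k) (j : Fin m) (u : Fin (k * m + 1)) :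
    (spider k m).Adj (legVertex i j) u ↔
      u = parent (legVertex i j) ∨ ∃ h : j.val + 1 < m, u = legVertex i ⟨j + 1, h⟩ := by
  rw [spider, SimpleGraph.fromRel_adj]
  constructor
  · rintro ⟨-, ⟨-, rfl⟩ | ⟨hu, hpar⟩⟩
    · exact Or.inl rfl
    · right
      obtain rfl | ⟨i', j', rfl⟩ := eq_zero_or_eq_legVertex u
      · exact absurd rfl hu
      have hj' : j'.val ≠ 0 := fun hj' => legVertex_ne_zero i j
        (hpar.trans (parent_legVertex_of_val_eq_zero i' hj'))
      obtain ⟨rfl, hjj⟩ := legVertex_inj.1 (hpar.trans (parent_legVertex_of_val_ne_zero i' hj'))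
      have hsucc : j.val + 1 = j'.val := by rw [hjj]; dsimp only; omega
      exact ⟨hsucc ▸ j'.isLt, by congr; ext; exact hsucc.symm⟩
  · rintro (rfl | ⟨h, rfl⟩)
    · exact ⟨(parent_lt (legVertex_ne_zero i j)).ne', Or.inl ⟨legVertex_ne_zero i j, rfl⟩⟩
    · refine ⟨fun he => by simpa [Fin.ext_iff] using legVertex_inj.1 he,
        Or.inr ⟨legVertex_ne_zero i _, ?_⟩⟩
      rw [parent_legVertex_of_val_ne_zero i (by simp)]
      rfl

open Fin.NatCast

theorem sdsMap_spider_prefixState (φ : Fin k → Fin (m + 1)) {i₁ i₂ : Fin k} (hi : i₁ ≠ i₂)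
    (h₁ : φ i₁ ≠ 0) (h₂ : φ i₂ ≠ 0) :
    sdsMap (spider k m) (fun _ => 1) (fun _ => 3) (List.finRange _) (prefixState φ) =
      prefixState fun i => φ i - 1 := by
  apply sdsMap_finRange_eq
  intro v
  obtain rfl | ⟨i, j, rfl⟩ := eq_zero_or_eq_legVertex v
  · have hm : 0 < m := by
      have := (φ i₁).isLt
      have := Fin.val_ne_zero_iff.2 h₁
      omega
    rw [prefixState_zero]
    refine localStep_one_three_self_of_two_adj _ _ (a := legVertex i₁ ⟨0, hm⟩)
      (b := legVertex i₂ ⟨0, hm⟩) (fun h => hi (legVertex_inj.1 h).1)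
      (spider_adj_zero_legVertex i₁ rfl) (spider_adj_zero_legVertex i₂ rfl) ?_ ?_ ?_ <;>
      simp [Fin.pos_iff_ne_zero, h₁, h₂]
  · have hpar := parent_lt (legVertex_ne_zero i j)
    rw [prefixState_legVertex, decide_lt_val_sub_one (φ i) j.isLt]
    by_cases hj : j.val + 1 < m
    · have hchild : legVertex i j < legVertex i ⟨j + 1, hj⟩ := by
        rw [Fin.lt_def, val_legVertex, val_legVertex]
        dsimp only
        omega
      rw [localStep_one_three_self_of_adj_iff_pair _ _ (hpar.trans hchild).ne fun u => by
        rw [spider_adj_legVertex_iff]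
        exact ⟨Or.imp_right fun ⟨_, hu⟩ => hu, Or.imp_right fun hu => ⟨hj, hu⟩⟩]
      simp only [lt_irrefl, if_false, if_pos hpar, if_neg (lt_asymm hchild),
        prefixState_legVertex, prefixState_parent_legVertex, decide_eq_true_eq]
    · have hleaf : decide (j.val + 1 < (φ i).val) = false := by
        have := (φ i).isLt
        simp only [decide_eq_false_iff_not]
        omega
      rw [localStep_one_three_self_of_adj_iff _ _ fun u => by
        rw [spider_adj_legVertex_iff]
        exact ⟨(Or.resolve_right · fun ⟨h, _⟩ => hj h), Or.inl⟩]
      simp only [lt_irrefl, if_false, if_pos hpar, prefixState_legVertex,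
        prefixState_parent_legVertex, hleaf, Bool.and_false, Bool.or_false, decide_eq_true_eq]

theorem iterate_sdsMap_spider_prefixState (φ : Fin k → Fin (m + 1))
    (hφ : ∀ t : Fin (m + 1), ∃ i₁ i₂, i₁ ≠ i₂ ∧ φ i₁ ≠ t ∧ φ i₂ ≠ t) (t : ℕ) :
    (sdsMap (spider k m) (fun _ => 1) (fun _ => 3) (List.finRange _))^[t] (prefixState φ) =
      prefixState fun i => φ i - (t : Fin (m + 1)) := by
  induction t with
  | zero => simp
  | succ t ih =>
    obtain ⟨i₁, i₂, hi, h₁, h₂⟩ := hφ t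
    rw [Function.iterate_succ_apply', ih,
      sdsMap_spider_prefixState _ hi (sub_ne_zero.2 h₁) (sub_ne_zero.2 h₂)]
    simp [sub_sub]

theorem iterate_sdsMap_spider_prefixState_eq_self_iff [NeZero k] (φ : Fin k → Fin (m + 1))
    (hφ : ∀ t : Fin (m + 1), ∃ i₁ i₂, i₁ ≠ i₂ ∧ φ i₁ ≠ t ∧ φ i₂ ≠ t) (t : ℕ) :
    (sdsMap (spider k m) (fun _ => 1) (fun _ => 3) (List.finRange _))^[t] (prefixState φ) =
      prefixState φ ↔ m + 1 ∣ t := by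
  rw [iterate_sdsMap_spider_prefixState φ hφ, prefixState_injective.eq_iff,
    ← Fin.natCast_eq_zero]
  exact ⟨fun h => by simpa using congrFun h 0, fun h => by simp [h]⟩

end

/-- for every integer `c ≥ 2` there exist a tree `X` on `n = 4c - 3`
vertices and a permutation `π` of its vertices (given as a duplicate-free list containing
every vertex) such that the bi-threshold SDS map over `X` with thresholds
`(kup, kdown) = (1, 3)` at every vertex and update sequence `π` has a periodic orbit of
length `c`. -/
theorem exists_tree_bithreshold_cycle
    (c : ℕ) (hc : 2 ≤ c) :
    ∃ (G : SimpleGraph (Fin (4 * c - 3))) (π : List (Fin (4 * c - 3))),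
      G.IsTree ∧ π.Nodup ∧ (∀ v, v ∈ π) ∧
      ∃ x : Fin (4 * c - 3) → Bool,
        (sdsMap G (fun _ => 1) (fun _ => 3) π)^[c] x = x ∧
        ∀ p : ℕ, 0 < p → p < c → (sdsMap G (fun _ => 1) (fun _ => 3) π)^[p] x ≠ x := by
  obtain ⟨m, rfl⟩ : ∃ m, c = m + 1 := ⟨c - 1, by omega⟩
  rw [show 4 * (m + 1) - 3 = 4 * m + 1 by omega]
  have h10 : (1 : Fin (m + 1)) ≠ 0 := by
    rw [Ne, Fin.one_eq_zero_iff]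
    omega
  let φ : Fin 4 → Fin (m + 1) := ![1, 1, 0, 0]
  have hφ : ∀ t, ∃ i₁ i₂, i₁ ≠ i₂ ∧ φ i₁ ≠ t ∧ φ i₂ ≠ t := fun t => by
    by_cases ht : t = 1
    · exact ⟨2, 3, by decide, by simp [φ, ht, h10.symm]⟩
    · exact ⟨0, 1, by decide, by simp [φ, Ne.symm ht]⟩
  have hperiod := iterate_sdsMap_spider_prefixState_eq_self_iff _ hφ
  exact ⟨spider 4 m, List.finRange _, isTree_spider 4 m, List.nodup_finRange _,
    List.mem_finRange, prefixState φ, (hperiod _).2 dvd_rfl,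
    fun p hp hpc h => Nat.not_dvd_of_pos_of_lt hp hpc ((hperiod p).1 h)⟩
end

section
/- Let X be a finite tree and let every vertex v carry the bi-threshold function with thresholds k↑_v = 1 and k↓_v = d(v)+1, where d(v) is the degree of v. Then for every permutation π of the vertices, every periodic point of the SDS map F_π is a fixed point; that is, F_π only has fixed points as limit sets. -/
/-! With `k↑ = 1` and `k↓ = d + 1` a vertex flips exactly when some neighbour disagrees with
it; in particular a leaf `ℓ` copies its neighbour `u`. Induct on the forest, deleting the edge
at a leaf. Rotating the update order turns the SDS map `g ∘ f` into `f ∘ g`, which does not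
affect whether periodic points are fixed, so we may update `u` first. Then every sweep ends
in a state with `x ℓ = x u`, and from such a state `u` sees the same disagreement with or
without `ℓ`, so away from `ℓ` the sweep agrees with the sweep of the smaller forest, where `ℓ`
is isolated. A periodic point of the big map therefore gives a periodic point of the small
one, which is fixed by induction; hence it is fixed by the big map as well. -/

open Function Set SimpleGraph

namespace Function

variable {α : Type*}

theorem periodicPts_comp_subset_fixedPoints {f g : α → α}
    (h : periodicPts (f ∘ g) ⊆ fixedPoints (f ∘ g)) :
    periodicPts (g ∘ f) ⊆ fixedPoints (g ∘ f) := by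
  rintro x ⟨n, hn, hx⟩
  have hfx : IsPeriodicPt (f ∘ g) n (f x) := by
    have hsc : Semiconj f (g ∘ f) (f ∘ g) := fun _ => rfl
    rw [IsPeriodicPt, IsFixedPt, ← hsc.iterate_right n x, hx.eq]
  have hz : IsFixedPt (g ∘ f) (g (f x)) := congrArg g (h ⟨n, hn, hfx⟩)
  exact (hx.eq_of_apply_eq_same (hz.isPeriodicPt n) hn hz.symm).symm

end Function

namespace SimpleGraph

variable {V : Type*} {G : SimpleGraph V}

theorem IsAcyclic.exists_adj_forall_adj_eq [Finite V] (hG : G.IsAcyclic) {a b : V}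
    (hab : G.Adj a b) : ∃ ℓ u, G.Adj ℓ u ∧ ∀ w, G.Adj ℓ w → w = u := by
  have : Nonempty V := ⟨a⟩
  obtain ⟨ℓ, v, p, hp, hmax⟩ := Walk.exists_isPath_forall_isPath_length_le_length G
  have hnil : ¬p.Nil := by
    rw [← Walk.length_eq_zero_iff, ← ne_eq, ← Nat.one_le_iff_ne_zero]
    simpa using hmax a b (Walk.cons hab .nil) (by simp [hab.ne])
  refine ⟨ℓ, p.snd, p.adj_snd hnil, fun w hw => hG.eq_snd_of_adj_start hp hw ?_⟩
  by_contra hw'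
  have := hmax w v (p.cons hw.symm) (hp.cons hw')
  simp at this

end SimpleGraph

section SDS

variable {n : ℕ} {G : SimpleGraph (Fin n)} {kup kdown : Fin n → ℕ}

theorem localStep_apply_of_ne (x : Fin n → Bool) {v w : Fin n} (h : w ≠ v) :
    localStep G kup kdown x v w = x w :=
  update_of_ne h _ _

theorem sdsMap_cons (v : Fin n) (l : List (Fin n)) (x : Fin n → Bool) :
    sdsMap G kup kdown (v :: l) x = sdsMap G kup kdown l (localStep G kup kdown x v) :=
  rfl

theorem sdsMap_append (l₁ l₂ : List (Fin n)) :
    sdsMap G kup kdown (l₁ ++ l₂) = sdsMap G kup kdown l₂ ∘ sdsMap G kup kdown l₁ :=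
  funext fun _ => List.foldl_append ..

theorem sdsMap_apply_of_notMem {l : List (Fin n)} {v : Fin n} (hv : v ∉ l) (x : Fin n → Bool) :
    sdsMap G kup kdown l x v = x v := by
  induction l generalizing x with
  | nil => rfl
  | cons w l ih =>
    rw [List.mem_cons, not_or] at hv
    exact (ih hv.2 _).trans (localStep_apply_of_ne x hv.1)

end SDS

local notation "step[" G "]" => localStep G (fun _ => 1) (fun u => Set.ncard (neighborSet G u) + 1)
local notation "sweep[" G "]" => sdsMap G (fun _ => 1) (fun u => Set.ncard (neighborSet G u) + 1)

namespace DisagreementSDS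

variable {n : ℕ} {G : SimpleGraph (Fin n)}

theorem localStep_apply_self_ne_iff (x : Fin n → Bool) (v : Fin n) :
    step[G] x v v ≠ x v ↔ ∃ w, G.Adj v w ∧ x w ≠ x v := by
  set S := {w | G.Adj v w ∧ x w = true}
  have hS : S ⊆ G.neighborSet v := fun w hw => hw.1
  rw [localStep, update_self, sigmaLoc]
  cases hxv : x v
  · have : 1 ≤ S.ncard ↔ ∃ w, G.Adj v w ∧ x w = true := by
      rw [Nat.one_le_iff_ne_zero, ← Nat.pos_iff_ne_zero, Set.ncard_pos]
      rfl
    simp [S, this]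
  · have : S.ncard < (G.neighborSet v).ncard ↔ ∃ w, G.Adj v w ∧ x w = false := by
      rw [← Set.ncard_sdiff_add_ncard_of_subset hS, lt_add_iff_pos_left, Set.ncard_pos]
      exact exists_congr fun w => by simp +contextual [S]
    simp [S, this]

theorem localStep_apply_of_forall_not_adj {v : Fin n} (hv : ∀ w, ¬G.Adj v w)
    (x : Fin n → Bool) (w : Fin n) : step[G] x w v = x v := by
  obtain rfl | hwv := eq_or_ne w v
  · by_contra h
    obtain ⟨z, hz, -⟩ := (localStep_apply_self_ne_iff x w).mp h
    exact hv z hz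
  · exact localStep_apply_of_ne x hwv.symm

theorem sdsMap_apply_of_forall_not_adj {v : Fin n} (hv : ∀ w, ¬G.Adj v w)
    (l : List (Fin n)) (x : Fin n → Bool) : sweep[G] l x v = x v := by
  induction l generalizing x with
  | nil => rfl
  | cons w l ih => exact (ih _).trans (localStep_apply_of_forall_not_adj hv x w)

theorem localStep_apply_self_of_forall_adj_eq {ℓ u : Fin n} (hℓu : G.Adj ℓ u)
    (hleaf : ∀ w, G.Adj ℓ w → w = u) (x : Fin n → Bool) : step[G] x ℓ ℓ = x u := by
  by_cases h : x u = x ℓ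
  · rw [h]
    by_contra hflip
    obtain ⟨w, hw, hne⟩ := (localStep_apply_self_ne_iff x ℓ).mp hflip
    exact hne (hleaf w hw ▸ h)
  · have hflip := (localStep_apply_self_ne_iff x ℓ).mpr ⟨u, hℓu, h⟩
    rw [Bool.eq_not.mpr hflip, Bool.eq_not.mpr h]

theorem sdsMap_apply_eq_of_forall_adj_eq {ℓ u : Fin n} (hℓu : G.Adj ℓ u)
    (hleaf : ∀ w, G.Adj ℓ w → w = u) {l : List (Fin n)} (hu : u ∉ l) (hℓ : ℓ ∈ l)
    (x : Fin n → Bool) : sweep[G] l x ℓ = sweep[G] l x u := by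
  induction l generalizing x with
  | nil => cases hℓ
  | cons v l ih =>
    rw [List.mem_cons, not_or] at hu
    by_cases hℓl : ℓ ∈ l
    · exact ih hu.2 hℓl _
    obtain rfl : ℓ = v := (List.mem_cons.mp hℓ).resolve_right hℓl
    rw [sdsMap_cons, sdsMap_apply_of_notMem hℓl, sdsMap_apply_of_notMem hu.2,
      localStep_apply_self_of_forall_adj_eq hℓu hleaf, localStep_apply_of_ne _ hu.1]

theorem localStep_eqOn_deleteIncidenceSet {ℓ u : Fin n} (hleaf : ∀ w, G.Adj ℓ w → w = u)
    {x y : Fin n → Bool} (hxy : EqOn x y {ℓ}ᶜ) {v : Fin n} (hv : v = u → x ℓ = x u) :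
    EqOn (step[G] x v) (step[G.deleteIncidenceSet ℓ] y v) {ℓ}ᶜ := by
  intro w (hw : w ≠ ℓ)
  obtain rfl | hwv := eq_or_ne w v
  · have hdis : (∃ z, G.Adj w z ∧ x z ≠ x w) ↔
        ∃ z, (G.deleteIncidenceSet ℓ).Adj w z ∧ y z ≠ y w := by
      refine exists_congr fun z => ?_
      rw [deleteIncidenceSet_adj, ← hxy hw]
      obtain rfl | hz := eq_or_ne z ℓ
      · simp only [ne_eq, not_true_eq_false, and_false, false_and, iff_false, not_and,
          not_not]
        intro hzw
        obtain rfl := hleaf w hzw.symm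
        exact hv rfl
      · rw [hxy hz]
        simp [hw, hz]
    have hflip := (localStep_apply_self_ne_iff x w).trans <| hdis.trans
      (localStep_apply_self_ne_iff y w).symm
    rw [hxy hw] at hflip
    have bool_eq_of_ne_iff_ne : ∀ a b c : Bool, (a ≠ c ↔ b ≠ c) → a = b := by decide
    exact bool_eq_of_ne_iff_ne _ _ _ hflip
  · rw [localStep_apply_of_ne _ hwv, localStep_apply_of_ne _ hwv]
    exact hxy hw

theorem sdsMap_eqOn_deleteIncidenceSet {ℓ u : Fin n} (hleaf : ∀ w, G.Adj ℓ w → w = u)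
    {l : List (Fin n)} (hu : u ∉ l) {x y : Fin n → Bool} (hxy : EqOn x y {ℓ}ᶜ) :
    EqOn (sweep[G] l x) (sweep[G.deleteIncidenceSet ℓ] l y) {ℓ}ᶜ := by
  induction l generalizing x y with
  | nil => exact hxy
  | cons v l ih =>
    rw [List.mem_cons, not_or] at hu
    exact ih hu.2 (localStep_eqOn_deleteIncidenceSet hleaf hxy fun h => absurd h.symm hu.1)

theorem periodicPts_subset_fixedPoints_of_forall_adj_eq {ℓ u : Fin n} (hℓu : G.Adj ℓ u)
    (hleaf : ∀ w, G.Adj ℓ w → w = u) {l : List (Fin n)} (hu : u ∉ l) (hℓ : ℓ ∈ l)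
    (h' : periodicPts (sweep[G.deleteIncidenceSet ℓ] (u :: l)) ⊆
      fixedPoints (sweep[G.deleteIncidenceSet ℓ] (u :: l))) :
    periodicPts (sweep[G] (u :: l)) ⊆ fixedPoints (sweep[G] (u :: l)) := by
  set F := sweep[G] (u :: l)
  set F' := sweep[G.deleteIncidenceSet ℓ] (u :: l)
  have hsync (y) : F y ℓ = F y u := sdsMap_apply_eq_of_forall_adj_eq hℓu hleaf hu hℓ _
  have hcongr {y y'} (hy : y ℓ = y u) (hyy' : EqOn y y' {ℓ}ᶜ) : EqOn (F y) (F' y') {ℓ}ᶜ :=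
    sdsMap_eqOn_deleteIncidenceSet hleaf hu
      (localStep_eqOn_deleteIncidenceSet hleaf hyy' fun _ => hy)
  have hF'ℓ (y) : F' y ℓ = y ℓ :=
    sdsMap_apply_of_forall_not_adj (fun w h => (deleteIncidenceSet_adj.mp h).2.1 rfl) _ _
  rintro x ⟨q, hq, hx⟩
  have hxℓ : x ℓ = x u := by
    rw [← hx.eq, ← Nat.succ_pred_eq_of_pos hq, iterate_succ_apply']
    exact hsync _
  have hiter (k : ℕ) : F^[k] x ℓ = F^[k] x u ∧ EqOn (F^[k] x) (F'^[k] x) {ℓ}ᶜ ∧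
      F'^[k] x ℓ = x ℓ := by
    induction k with
    | zero => exact ⟨hxℓ, eqOn_refl _ _, rfl⟩
    | succ k ih =>
      simp only [iterate_succ_apply']
      exact ⟨hsync _, hcongr ih.1 ih.2.1, (hF'ℓ _).trans ih.2.2⟩
  have hF'x : F' x = x := by
    refine h' ⟨q, hq, funext fun w => ?_⟩
    obtain rfl | hw := eq_or_ne w ℓ
    · exact (hiter q).2.2
    · rw [← (hiter q).2.1 hw, hx.eq]
  funext w
  have hFx : EqOn (F x) x {ℓ}ᶜ := fun w hw =>
    (hcongr hxℓ (eqOn_refl x _) hw).trans (congrFun hF'x w)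
  obtain rfl | hw := eq_or_ne w ℓ
  · rw [hsync, hFx hℓu.ne.symm, hxℓ]
  · exact hFx hw

theorem periodicPts_sdsMap_subset_fixedPoints (hG : G.IsAcyclic) {l : List (Fin n)}
    (hl : l.Nodup) (hmem : ∀ v, v ∈ l) :
    periodicPts (sweep[G] l) ⊆ fixedPoints (sweep[G] l) := by
  induction G using WellFoundedLT.induction generalizing l with
  | _ G ih =>
  rcases em (∃ a b, G.Adj a b) with ⟨a, b, hab⟩ | hE
  swap
  · exact fun x _ => funext fun v =>
      sdsMap_apply_of_forall_not_adj (fun w h => hE ⟨v, w, h⟩) l x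
  obtain ⟨ℓ, u, hℓu, hleaf⟩ := hG.exists_adj_forall_adj_eq hab
  obtain ⟨s, t, rfl⟩ := List.append_of_mem (hmem u)
  have hrot : (u :: (t ++ s)).Perm (s ++ u :: t) := List.perm_append_comm (l₁ := u :: t)
  have hnodup := hrot.nodup_iff.mpr hl
  have hu : u ∉ t ++ s := (List.nodup_cons.mp hnodup).1
  have hℓ : ℓ ∈ t ++ s :=
    (List.mem_cons.mp (hrot.mem_iff.mpr (hmem ℓ))).resolve_left hℓu.ne
  have hlt : G.deleteIncidenceSet ℓ < G :=
    (deleteIncidenceSet_le G ℓ).lt_of_ne fun h =>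
      (deleteIncidenceSet_adj.mp (h ▸ hℓu)).2.1 rfl
  have h' := ih _ hlt (hG.anti (deleteIncidenceSet_le G ℓ)) hnodup
    fun v => hrot.mem_iff.mpr (hmem v)
  rw [sdsMap_append]
  apply periodicPts_comp_subset_fixedPoints
  rw [← sdsMap_append]
  exact periodicPts_subset_fixedPoints_of_forall_adj_eq hℓu hleaf hu hℓ h'

end DisagreementSDS

/-- over a finite tree with thresholds `kup v = 1` and `kdown v = d(v) + 1`
at every vertex `v`, for every permutation update sequence `π` every periodic point of the
SDS map `F_π` is a fixed point: `F_π` only has fixed points as limit sets. -/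
theorem tree_sds_only_fixed_points
    (n : ℕ) (G : SimpleGraph (Fin n)) (hG : G.IsTree)
    (π : Equiv.Perm (Fin n)) :
    ∀ (x : Fin n → Bool) (q : ℕ), 0 < q →
      (sdsMap G (fun _ => 1) (fun u => (G.neighborSet u).ncard + 1)
          (List.ofFn fun i => π i))^[q] x = x →
      sdsMap G (fun _ => 1) (fun u => (G.neighborSet u).ncard + 1)
          (List.ofFn fun i => π i) x = x := by
  intro x q hq hx
  have hl : (List.ofFn fun i => π i).Nodup := List.nodup_ofFn.mpr π.injective
  have hmem (v : Fin n) : v ∈ List.ofFn fun i => π i :=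
    List.mem_ofFn.mpr ⟨π.symm v, π.apply_symm_apply v⟩
  exact DisagreementSDS.periodicPts_sdsMap_subset_fixedPoints hG.isAcyclic hl hmem ⟨q, hq, hx⟩
end
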